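/- arXiv:1403.4492 — 5 statements merged into one kernel-verified Lean document; each statement's English description precedes it below -/
import Mathlib

section
/- Fix c_1, …, c_K > 0 and T > 0. The maximum of ∑_{k=1}^K τ_k · log₂(1 + c_k/τ_k) over τ_k > 0 with ∑_{k=1}^K τ_k = T is attained exactly when c_k/τ_k is the same constant for all k, i.e., τ_k* = T·c_k / (∑_{i=1}^K c_i), and the optimal value is T · log₂(1 + (∑_{k=1}^K c_k)/T). -/
/-! Each summand τ·log₂(1 + c/τ) is the perspective of the strictly concave function
x ↦ log₂(1 + x). Jensen's inequality with weights τ_k/T at the points c_k/τ_k bounds the sum by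
T·log₂(1 + ∑ c_k/T), and strict concavity forces equality exactly when all c_k/τ_k coincide. -/

open Finset Real

section Perspective

variable {ι : Type*} {t : Finset ι} {s : Set ℝ} {f : ℝ → ℝ} {τ c : ι → ℝ}

lemma sum_div_smul_eq (T : ℝ) (g : ι → ℝ) :
    ∑ i ∈ t, (τ i / T) • g i = (∑ i ∈ t, τ i * g i) / T := by
  rw [Finset.sum_div]
  exact Finset.sum_congr rfl fun i _ => by rw [smul_eq_mul]; ring

lemma sum_mul_div_cancel (hτ : ∀ i ∈ t, 0 < τ i) : ∑ i ∈ t, τ i * (c i / τ i) = ∑ i ∈ t, c i :=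
  Finset.sum_congr rfl fun i hi => mul_div_cancel₀ _ (hτ i hi).ne'

lemma sum_div_sum_self (hτ : ∀ i ∈ t, 0 < τ i) (ht : t.Nonempty) :
    ∑ i ∈ t, τ i / ∑ j ∈ t, τ j = 1 := by
  rw [← Finset.sum_div, div_self (Finset.sum_pos hτ ht).ne']

lemma ConcaveOn.sum_mul_map_div_le (hf : ConcaveOn ℝ s f) (hτ : ∀ i ∈ t, 0 < τ i)
    (hmem : ∀ i ∈ t, c i / τ i ∈ s) :
    ∑ i ∈ t, τ i * f (c i / τ i) ≤ (∑ i ∈ t, τ i) * f ((∑ i ∈ t, c i) / ∑ i ∈ t, τ i) := by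
  rcases t.eq_empty_or_nonempty with rfl | ht
  · simp
  have hT := Finset.sum_pos hτ ht
  have := hf.le_map_sum (fun i hi => (div_pos (hτ i hi) hT).le) (sum_div_sum_self hτ ht) hmem
  simp only [sum_div_smul_eq, sum_mul_div_cancel hτ] at this
  rwa [div_le_iff₀' hT] at this

lemma StrictConcaveOn.sum_mul_map_div_eq_iff (hf : StrictConcaveOn ℝ s f)
    (hτ : ∀ i ∈ t, 0 < τ i) (hmem : ∀ i ∈ t, c i / τ i ∈ s) :
    ∑ i ∈ t, τ i * f (c i / τ i) = (∑ i ∈ t, τ i) * f ((∑ i ∈ t, c i) / ∑ i ∈ t, τ i) ↔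
      ∀ i ∈ t, c i / τ i = (∑ i ∈ t, c i) / ∑ i ∈ t, τ i := by
  rcases t.eq_empty_or_nonempty with rfl | ht
  · simp
  have hT := Finset.sum_pos hτ ht
  have := hf.map_sum_eq_iff (fun i hi => div_pos (hτ i hi) hT) (sum_div_sum_self hτ ht) hmem
  simp only [sum_div_smul_eq, sum_mul_div_cancel hτ] at this
  rwa [eq_div_iff hT.ne', mul_comm, eq_comm] at this

end Perspective

lemma strictConcaveOn_logb_one_add {b : ℝ} (hb : 1 < b) :
    StrictConcaveOn ℝ (Set.Ioi (-1)) fun x => logb b (1 + x) := by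
  refine ⟨convex_Ioi _, fun x hx y hy hxy a a' ha ha' haa' => ?_⟩
  have hx' : 0 < 1 + x := by linarith [Set.mem_Ioi.1 hx]
  have hy' : 0 < 1 + y := by linarith [Set.mem_Ioi.1 hy]
  have hlog := strictConcaveOn_log_Ioi.2 hx' hy' (by simpa using hxy) ha ha' haa'
  have hpt : a • (1 + x) + a' • (1 + y) = 1 + (a • x + a' • y) := by
    simp only [smul_eq_mul]; linear_combination haa'
  rw [hpt] at hlog
  simp only [logb, smul_eq_mul, mul_div_assoc', ← add_div] at hlog ⊢
  exact div_lt_div_of_pos_right hlog (log_pos hb)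

/-- Fix `c_1, …, c_K > 0` and `T > 0`. The maximum of
`∑ τ_k · log₂(1 + c_k/τ_k)` over `τ_k > 0` with `∑ τ_k = T` is attained exactly
when `c_k/τ_k` is the same constant for all `k`, i.e. at `τ_k* = T·c_k/∑ c_i`,
and the optimal value is `T · log₂(1 + (∑ c_k)/T)`. -/
theorem stmt_2 (K : ℕ) (hK : 0 < K) (c : Fin K → ℝ) (hc : ∀ k, 0 < c k)
    (T : ℝ) (hT : 0 < T) :
    (∀ τ : Fin K → ℝ, (∀ k, 0 < τ k) → (∑ k, τ k) = T →
      ∑ k, τ k * Real.logb 2 (1 + c k / τ k) ≤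
        T * Real.logb 2 (1 + (∑ k, c k) / T)) ∧
    (∀ τ : Fin K → ℝ, (∀ k, 0 < τ k) → (∑ k, τ k) = T →
      ((∑ k, τ k * Real.logb 2 (1 + c k / τ k) =
          T * Real.logb 2 (1 + (∑ k, c k) / T)) ↔
        ∀ k, τ k = T * c k / (∑ i, c i))) ∧
    ((∀ k, 0 < T * c k / (∑ i, c i)) ∧ (∑ k, T * c k / (∑ i, c i)) = T) := by
  have hC : 0 < ∑ i, c i :=
    Finset.sum_pos (fun i _ => hc i) (Finset.univ_nonempty_iff.2 (Fin.pos_iff_nonempty.1 hK))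
  have hf := strictConcaveOn_logb_one_add one_lt_two
  have hmem (τ : Fin K → ℝ) (hτ : ∀ k, 0 < τ k) : ∀ k ∈ univ, c k / τ k ∈ Set.Ioi (-1) :=
    fun k _ => neg_one_lt_zero.trans (div_pos (hc k) (hτ k))
  refine ⟨fun τ hτ hsum => ?_, fun τ hτ hsum => ?_, fun k => div_pos (mul_pos hT (hc k)) hC, ?_⟩
  · simpa only [hsum] using hf.concaveOn.sum_mul_map_div_le (fun k _ => hτ k) (hmem τ hτ)
  · rw [← hsum, hf.sum_mul_map_div_eq_iff (fun k _ => hτ k) (hmem τ hτ), hsum]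
    simp only [mem_univ, true_implies]
    refine forall_congr' fun k => ?_
    rw [div_eq_div_iff (hτ k).ne' hT.ne', eq_div_iff hC.ne']
    constructor <;> intro h <;> linarith
  · rw [← sum_div, ← mul_sum, mul_div_cancel_right₀ T hC.ne']
end

section
/- For λ > 0, the function φ(τ) = (1 − τ)·log₂(1 + λ·τ/(1 − τ)), defined on τ ∈ (0, 1), is strictly concave on (0,1). -/
open Real Set

private lemma scc_congr {s : Set ℝ} {f h : ℝ → ℝ} (hf : StrictConcaveOn ℝ s f)
    (he : ∀ x ∈ s, f x = h x) : StrictConcaveOn ℝ s h := by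
  refine ⟨hf.1, fun {x} hx {y} hy hxy {a} {b} ha hb hab => ?_⟩
  rw [← he x hx, ← he y hy, ← he _ (hf.1 hx hy ha.le hb.le hab)]
  exact hf.2 hx hy hxy ha hb hab

private lemma scc_div {s : Set ℝ} {f : ℝ → ℝ} {c : ℝ} (hc : 0 < c)
    (hf : StrictConcaveOn ℝ s f) : StrictConcaveOn ℝ s (fun x => f x / c) := by
  refine ⟨hf.1, fun {x} hx {y} hy hxy {a} {b} ha hb hab => ?_⟩
  have := hf.2 hx hy hxy ha hb hab
  simp only [smul_eq_mul] at this ⊢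
  rw [mul_div_assoc', mul_div_assoc', ← add_div, div_lt_div_iff_of_pos_right hc]
  exact this

/-- For `λ > 0`, the function `φ(τ) = (1 − τ)·log₂(1 + λ·τ/(1 − τ))` is strictly
concave on `(0, 1)`. -/
theorem stmt_6 (l : ℝ) (hl : 0 < l) :
    StrictConcaveOn ℝ (Set.Ioo (0 : ℝ) 1)
      (fun τ : ℝ => (1 - τ) * Real.logb 2 (1 + l * τ / (1 - τ))) := by
  set g : ℝ → ℝ := fun τ => (1 - τ) * Real.log (1 + (l - 1) * τ)
      - (1 - τ) * Real.log (1 - τ) with hgdef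
  set g1 : ℝ → ℝ := fun τ => -Real.log (1 + (l - 1) * τ)
      + ((1 - τ) * (l - 1)) / (1 + (l - 1) * τ) + Real.log (1 - τ) + 1 with hg1def
  have hApos : ∀ τ ∈ Ioo (0:ℝ) 1, 0 < 1 + (l - 1) * τ := by
    intro τ hτ
    nlinarith [hτ.1, hτ.2, mul_pos hl hτ.1]
  have hBpos : ∀ τ ∈ Ioo (0:ℝ) 1, 0 < 1 - τ := fun τ hτ => by linarith [hτ.2]
  have hg' : ∀ τ ∈ Ioo (0:ℝ) 1, HasDerivAt g (g1 τ) τ := by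
    intro τ hτ
    have hA := hApos τ hτ
    have hB := hBpos τ hτ
    have hAτ : HasDerivAt (fun τ : ℝ => 1 + (l - 1) * τ) (l - 1) τ := by
      simpa using ((hasDerivAt_id τ).const_mul (l - 1)).const_add 1
    have hBτ : HasDerivAt (fun τ : ℝ => 1 - τ) (-1) τ := by
      simpa using (hasDerivAt_id τ).const_sub 1
    have hlogA : HasDerivAt (fun τ : ℝ => Real.log (1 + (l - 1) * τ))
        ((l - 1) / (1 + (l - 1) * τ)) τ := hAτ.log hA.ne'
    have hlogB : HasDerivAt (fun τ : ℝ => Real.log (1 - τ)) (-1 / (1 - τ)) τ :=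
      hBτ.log hB.ne'
    have h1 := hBτ.mul hlogA
    have h2 := hBτ.mul hlogB
    have := h1.sub h2
    refine this.congr_deriv ?_
    simp only [hg1def]
    field_simp
    ring
  have hg1' : ∀ τ ∈ Ioo (0:ℝ) 1,
      HasDerivAt g1 (-(l ^ 2) / ((1 - τ) * (1 + (l - 1) * τ) ^ 2)) τ := by
    intro τ hτ
    have hA := hApos τ hτ
    have hB := hBpos τ hτ
    have hAτ : HasDerivAt (fun τ : ℝ => 1 + (l - 1) * τ) (l - 1) τ := by
      simpa using ((hasDerivAt_id τ).const_mul (l - 1)).const_add 1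
    have hBτ : HasDerivAt (fun τ : ℝ => 1 - τ) (-1) τ := by
      simpa using (hasDerivAt_id τ).const_sub 1
    have hlogA : HasDerivAt (fun τ : ℝ => Real.log (1 + (l - 1) * τ))
        ((l - 1) / (1 + (l - 1) * τ)) τ := hAτ.log hA.ne'
    have hlogB : HasDerivAt (fun τ : ℝ => Real.log (1 - τ)) (-1 / (1 - τ)) τ :=
      hBτ.log hB.ne'
    have hnum : HasDerivAt (fun τ : ℝ => (1 - τ) * (l - 1)) (-1 * (l - 1)) τ :=
      hBτ.mul_const (l - 1)
    have hdiv := hnum.div hAτ hA.ne'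
    have := ((hlogA.neg.add hdiv).add hlogB).add_const 1
    refine this.congr_deriv ?_
    field_simp
    ring
  have hgcc : StrictConcaveOn ℝ (Ioo (0:ℝ) 1) g := by
    apply strictConcaveOn_of_deriv2_neg (convex_Ioo 0 1)
    · exact fun x hx => (hg' x hx).continuousAt.continuousWithinAt
    · intro x hx
      rw [interior_Ioo] at hx
      have hev : deriv g =ᶠ[nhds x] g1 := by
        filter_upwards [Ioo_mem_nhds hx.1 hx.2] with y hy
        exact (hg' y hy).deriv
      show deriv (deriv g) x < 0
      rw [hev.deriv_eq, (hg1' x hx).deriv]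
      apply div_neg_of_neg_of_pos
      · nlinarith
      · exact mul_pos (hBpos x hx) (pow_pos (hApos x hx) 2)
  have hlog2 : (0:ℝ) < Real.log 2 := Real.log_pos one_lt_two
  apply scc_congr (scc_div hlog2 hgcc)
  intro τ hτ
  have hA := hApos τ hτ
  have hB := hBpos τ hτ
  have h1 : 1 + l * τ / (1 - τ) = (1 + (l - 1) * τ) / (1 - τ) := by
    field_simp
    ring
  rw [Real.logb, h1, Real.log_div hA.ne' hB.ne', hgdef]
  ring
end

section
/- For λ > 0, the function φ(τ) = (1 − τ)·log₂(1 + λτ/(1 − τ)) on [0, 1) satisfies φ(0) = 0, lim_{τ→1⁻} φ(τ) = 0, and φ attains a maximum at an interior point τ* ∈ (0, 1). -/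
open Real Filter Set Topology

private lemma stmt7_lim (l : ℝ) (hl : 0 < l) :
    Filter.Tendsto (fun τ : ℝ => (1 - τ) * Real.logb 2 (1 + l * τ / (1 - τ)))
      (nhdsWithin 1 (Set.Iio 1)) (nhds 0) := by
  have hE : ∀ᶠ τ in nhdsWithin (1:ℝ) (Set.Iio 1),
      (1 - τ) * Real.logb 2 (1 + l * τ / (1 - τ)) =
      ((1 - τ + l * τ) * Real.log (1 - τ + l * τ)
        - (1 - τ) * Real.log (1 - τ)
        - (l * τ) * Real.log (1 - τ + l * τ)) / Real.log 2 := by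
    filter_upwards [Ioo_mem_nhdsLT_of_mem (show (1:ℝ) ∈ Set.Ioc 0 1 by norm_num)]
      with τ hτ
    have h1 : (0:ℝ) < 1 - τ := by linarith [hτ.2]
    have h2 : (0:ℝ) < 1 - τ + l * τ := by nlinarith [hτ.1, hτ.2]
    have harg : 1 + l * τ / (1 - τ) = (1 - τ + l * τ) / (1 - τ) := by
      field_simp
    rw [harg, Real.logb, Real.log_div h2.ne' h1.ne']
    ring
  rw [Filter.tendsto_congr' hE]
  have hcont : Filter.Tendsto
      (fun τ : ℝ => ((1 - τ + l * τ) * Real.log (1 - τ + l * τ)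
        - (1 - τ) * Real.log (1 - τ)
        - (l * τ) * Real.log (1 - τ + l * τ)) / Real.log 2)
      (nhds 1) (nhds (((l) * Real.log l - 0 * Real.log 0 - l * Real.log l) / Real.log 2)) := by
    apply Filter.Tendsto.div_const
    apply Filter.Tendsto.sub
    apply Filter.Tendsto.sub
    · have := (Real.continuous_mul_log.comp
        (by continuity : Continuous fun τ : ℝ => 1 - τ + l * τ)).tendsto 1
      simpa [Function.comp_def] using this
    · have := (Real.continuous_mul_log.comp
        (by continuity : Continuous fun τ : ℝ => 1 - τ)).tendsto 1
      simpa [Function.comp_def] using this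
    · have h1 : Filter.Tendsto (fun τ : ℝ => l * τ) (nhds 1) (nhds l) := by
        simpa [Pi.mul_def] using (continuous_const.mul continuous_id).tendsto (1:ℝ)
      have h2 : Filter.Tendsto (fun τ : ℝ => Real.log (1 - τ + l * τ)) (nhds 1)
          (nhds (Real.log l)) := by
        have hc : Filter.Tendsto (fun τ : ℝ => 1 - τ + l * τ) (nhds 1) (nhds l) := by
          have := (by continuity : Continuous fun τ : ℝ => 1 - τ + l * τ).tendsto 1
          simpa using this
        exact (Real.continuousAt_log hl.ne').tendsto.comp hc
      exact h1.mul h2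
  have := hcont.mono_left (nhdsWithin_le_nhds (s := Set.Iio 1))
  simpa using this

/-- For `λ > 0`, the function `φ(τ) = (1 − τ)·log₂(1 + λτ/(1 − τ))` on `[0, 1)`
satisfies `φ(0) = 0`, `lim_{τ→1⁻} φ(τ) = 0`, and `φ` attains a maximum over
`[0,1)` at an interior point `τ* ∈ (0, 1)`. -/
theorem stmt_7 (l : ℝ) (hl : 0 < l) :
    (1 - (0:ℝ)) * Real.logb 2 (1 + l * 0 / (1 - 0)) = 0 ∧
    Filter.Tendsto (fun τ : ℝ => (1 - τ) * Real.logb 2 (1 + l * τ / (1 - τ)))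
      (nhdsWithin 1 (Set.Iio 1)) (nhds 0) ∧
    ∃ τstar ∈ Set.Ioo (0:ℝ) 1,
      IsMaxOn (fun τ : ℝ => (1 - τ) * Real.logb 2 (1 + l * τ / (1 - τ)))
        (Set.Ico (0:ℝ) 1) τstar := by
  set f : ℝ → ℝ := fun τ => (1 - τ) * Real.logb 2 (1 + l * τ / (1 - τ)) with hf
  have hlim := stmt7_lim l hl
  have hf0 : f 0 = 0 := by simp [hf]
  have hf1 : f 1 = 0 := by simp [hf]
  refine ⟨by simpa using hf0, hlim, ?_⟩
  -- continuity on [0,1]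
  have hcont : ContinuousOn f (Set.Icc 0 1) := by
    intro τ hτ
    rcases eq_or_lt_of_le hτ.2 with rfl | hτ1
    · -- at 1
      have hsub : Set.Icc (0:ℝ) 1 ⊆ Set.Iio 1 ∪ {1} := by
        intro x hx
        rcases lt_or_eq_of_le hx.2 with h | h
        · exact Or.inl h
        · exact Or.inr (by simp [h])
      unfold ContinuousWithinAt
      rw [hf1]
      refine Filter.Tendsto.mono_left ?_ (nhdsWithin_mono _ hsub)
      rw [nhdsWithin_union, nhdsWithin_singleton]
      refine Filter.Tendsto.sup hlim ?_
      have := tendsto_pure_nhds (fun τ : ℝ => (1 - τ) * Real.logb 2 (1 + l * τ / (1 - τ))) 1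
      simpa using this
    · -- τ < 1 : continuous at τ
      apply ContinuousAt.continuousWithinAt
      have hd : (1:ℝ) - τ ≠ 0 := by linarith
      have harg : (0:ℝ) < 1 + l * τ / (1 - τ) := by
        have h1 : (0:ℝ) < 1 - τ := by linarith
        have : 0 ≤ l * τ / (1 - τ) := div_nonneg (mul_nonneg hl.le hτ.1) h1.le
        linarith
      apply ContinuousAt.mul
      · fun_prop
      · have hinner : ContinuousAt (fun x : ℝ => 1 + l * x / (1 - x)) τ := by
          apply ContinuousAt.add continuousAt_const
          exact (continuousAt_const.mul continuousAt_id).div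
            (continuousAt_const.sub continuousAt_id) hd
        have hc : ContinuousAt (Real.logb 2 ∘ fun x : ℝ => 1 + l * x / (1 - x)) τ :=
          ContinuousAt.comp (f := fun x : ℝ => 1 + l * x / (1 - x))
            (Real.continuousAt_logb harg.ne') hinner
        exact hc
  obtain ⟨x, hx, hmax⟩ := isCompact_Icc.exists_isMaxOn (Set.nonempty_Icc.2 zero_le_one) hcont
  have hhalf : 0 < f (1/2) := by
    have : f (1/2) = (1/2) * Real.logb 2 (1 + l) := by
      simp only [hf]; norm_num
    rw [this]
    have := Real.logb_pos one_lt_two (by linarith : (1:ℝ) < 1 + l)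
    positivity
  have hfx : 0 < f x := lt_of_lt_of_le hhalf (hmax (by norm_num : (1/2:ℝ) ∈ Set.Icc 0 1))
  have hx0 : x ≠ 0 := by rintro rfl; rw [hf0] at hfx; exact lt_irrefl 0 hfx
  have hx1 : x ≠ 1 := by rintro rfl; rw [hf1] at hfx; exact lt_irrefl 0 hfx
  refine ⟨x, ⟨lt_of_le_of_ne hx.1 (Ne.symm hx0), lt_of_le_of_ne hx.2 hx1⟩, ?_⟩
  exact hmax.on_subset Set.Ico_subset_Icc_self
end

section
/- Let h₁,…,h_K ∈ ℂ^N, γ_k > 0, P > 0. The optimal value of the problem maximize ∑_k τ_k log₂(1 + (γ_k/τ_k)·h_k^H V h_k) over τ ∈ ℝ^{K+1}_{≥0} with ∑_{k=0}^K τ_k ≤ 1 and V ⪰ 0 with Tr(V) ≤ τ₀ P equals max_{τ₀ ∈ [0,1]} (1 − τ₀)·log₂(1 + τ₀/(1 − τ₀)·P·λ_max(G G^H)), where G = [√γ₁ h₁, …, √γ_K h_K]. -/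
/-!
Write `a_k = γ_k Re (h_kᴴ V h_k)`. The objective `∑ τ_k log (1 + a_k / τ_k)` is a sum of
perspectives of the concave map `x ↦ log (1 + x)`, so by Jensen it is at most
`T log (1 + (∑ a) / T)` with `T = ∑_{k ≥ 1} τ_k`. Since `∑ a = Re Tr (V G Gᴴ) ≤ λ_max Tr V`
`≤ (1 - T) P λ_max`, this is at most the one-dimensional objective at `τ₀ = 1 - T`. Conversely, for
`V = τ₀ P υ υᴴ` with `υ` a unit eigenvector for `λ_max` one gets `∑ a = τ₀ P λ_max`, and the
allocation `τ_k ∝ a_k` makes all ratios `a_k / τ_k` equal, so Jensen's inequality is an equality.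
-/

open Real Finset Matrix
open scoped ComplexOrder

theorem sum_mul_log_one_add_div_le {ι : Type*} [Fintype ι] (t a : ι → ℝ)
    (ht : ∀ i, 0 ≤ t i) (ha : ∀ i, 0 ≤ a i) :
    ∑ i, t i * log (1 + a i / t i) ≤ (∑ i, t i) * log (1 + (∑ i, a i) / ∑ i, t i) := by
  set T := ∑ i, t i
  rcases (sum_nonneg fun i _ => ht i : 0 ≤ T).eq_or_lt with hT | hT
  · have ht0 : ∀ i, t i = 0 := fun i =>
      (sum_eq_zero_iff_of_nonneg fun i _ => ht i).1 hT.symm i (mem_univ i)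
    simp [T, ht0]
  have hw : ∀ i, 0 ≤ t i / T := fun i => div_nonneg (ht i) hT.le
  have hx : ∀ i, 1 ≤ 1 + a i / t i := fun i =>
    le_add_of_nonneg_right (div_nonneg (ha i) (ht i))
  have hw1 : ∑ i, t i / T = 1 := by rw [← sum_div, div_self hT.ne']
  have hmean_ge : 1 ≤ ∑ i, t i / T * (1 + a i / t i) :=
    calc 1 = ∑ i, t i / T * 1 := by simp [hw1]
      _ ≤ _ := sum_le_sum fun i _ => mul_le_mul_of_nonneg_left (hx i) (hw i)
  -- the slack comes from the indices with `t i = 0`, where `a i / t i = 0`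
  have hmean_le : ∑ i, t i / T * (1 + a i / t i) ≤ 1 + (∑ i, a i) / T := by
    have hterm : ∀ i, t i / T * (1 + a i / t i) ≤ t i / T + a i / T := fun i => by
      rcases (ht i).eq_or_lt with h0 | h0
      · simpa [← h0] using div_nonneg (ha i) hT.le
      · field_simp; rfl
    calc ∑ i, t i / T * (1 + a i / t i) ≤ ∑ i, (t i / T + a i / T) :=
          sum_le_sum fun i _ => hterm i
      _ = 1 + (∑ i, a i) / T := by rw [sum_add_distrib, hw1, ← sum_div]
  calc ∑ i, t i * log (1 + a i / t i) = T * ∑ i, t i / T * log (1 + a i / t i) := by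
        rw [mul_sum]; exact sum_congr rfl fun i _ => by rw [← mul_assoc, mul_div_cancel₀ _ hT.ne']
    _ ≤ T * log (∑ i, t i / T * (1 + a i / t i)) := by
        gcongr
        exact strictConcaveOn_log_Ioi.concaveOn.le_map_sum (fun i _ => hw i) hw1
          (fun i _ => zero_lt_one.trans_le (hx i))
    _ ≤ T * log (1 + (∑ i, a i) / T) := by gcongr

theorem sum_mul_logb_one_add_div_le_of_sum_le {ι : Type*} [Fintype ι] {b : ℝ} (hb : 1 < b)
    (t a : ι → ℝ) (ht : ∀ i, 0 ≤ t i) (ha : ∀ i, 0 ≤ a i) {τ₀ c : ℝ} (hτ₀ : τ₀ + ∑ i, t i = 1)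
    (hac : ∑ i, a i ≤ τ₀ * c) :
    ∑ i, t i * logb b (1 + a i / t i) ≤ (1 - τ₀) * logb b (1 + τ₀ / (1 - τ₀) * c) := by
  have hT : ∑ i, t i = 1 - τ₀ := by linarith
  have hT0 : 0 ≤ 1 - τ₀ := hT ▸ sum_nonneg fun i _ => ht i
  have hlogb : 0 < log b := log_pos hb
  calc ∑ i, t i * logb b (1 + a i / t i) = (∑ i, t i * log (1 + a i / t i)) / log b := by
        simp only [logb, mul_div_assoc', sum_div]
    _ ≤ (1 - τ₀) * log (1 + (∑ i, a i) / (1 - τ₀)) / log b := by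
        gcongr; exact hT ▸ sum_mul_log_one_add_div_le t a ht ha
    _ ≤ (1 - τ₀) * log (1 + τ₀ / (1 - τ₀) * c) / log b := by
        have hA : 0 ≤ ∑ i, a i := sum_nonneg fun i _ => ha i
        gcongr
        rw [div_mul_eq_mul_div]; gcongr
    _ = (1 - τ₀) * logb b (1 + τ₀ / (1 - τ₀) * c) := by rw [logb, mul_div_assoc]

theorem sum_mul_logb_one_add_div_proportional {ι : Type*} [Fintype ι] (b T : ℝ) (a : ι → ℝ) :
    ∑ i, T * a i / (∑ j, a j) * logb b (1 + a i / (T * a i / ∑ j, a j)) =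
      T * logb b (1 + (∑ j, a j) / T) := by
  set A := ∑ j, a j
  rcases eq_or_ne A 0 with hA | hA
  · simp [hA]
  rcases eq_or_ne T 0 with hT | hT
  · simp [hT]
  have hterm : ∀ i, T * a i / A * logb b (1 + a i / (T * a i / A)) =
      T * a i / A * logb b (1 + A / T) := fun i => by
    rcases eq_or_ne (a i) 0 with hai | hai
    · simp [hai]
    · congr 3; field_simp
  rw [sum_congr rfl fun i _ => hterm i, ← sum_mul, ← sum_div, ← mul_sum,
    mul_div_cancel_right₀ _ hA]

theorem exists_sum_mul_logb_one_add_div_eq {ι : Type*} [Fintype ι] (b : ℝ) (a : ι → ℝ)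
    (ha : ∀ i, 0 ≤ a i) {τ₀ c : ℝ} (hτ₀ : τ₀ ≤ 1) (hac : ∑ i, a i = τ₀ * c) :
    ∃ t : ι → ℝ, (∀ i, 0 ≤ t i) ∧ τ₀ + ∑ i, t i ≤ 1 ∧
      ∑ i, t i * logb b (1 + a i / t i) = (1 - τ₀) * logb b (1 + τ₀ / (1 - τ₀) * c) := by
  have hA : 0 ≤ ∑ i, a i := sum_nonneg fun i _ => ha i
  refine ⟨fun i => (1 - τ₀) * a i / ∑ j, a j, fun i => by have := ha i; positivity, ?_, ?_⟩
  · rw [← sum_div, ← mul_sum]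
    have : (1 - τ₀) * (∑ j, a j) / ∑ j, a j ≤ 1 - τ₀ :=
      div_le_of_le_mul₀ hA (by linarith) le_rfl
    linarith
  · rw [sum_mul_logb_one_add_div_proportional, hac, div_mul_eq_mul_div]

namespace Matrix

variable {m n 𝕜 : Type*} [Fintype m] [Fintype n] [RCLike 𝕜]

theorem sum_star_dotProduct_mulVec_col (G : Matrix m n 𝕜) (V : Matrix m m 𝕜) :
    ∑ k, star (Gᵀ k) ⬝ᵥ (V *ᵥ Gᵀ k) = trace (V * (G * Gᴴ)) := by
  rw [← Matrix.mul_assoc, trace_mul_comm, ← Matrix.mul_assoc]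
  simp only [trace, diag_apply, mul_apply, dotProduct, mulVec, conjTranspose_apply,
    transpose_apply, Pi.star_apply, Finset.mul_sum, Finset.sum_mul]
  refine Finset.sum_congr rfl fun k _ => Finset.sum_comm.trans ?_
  exact Finset.sum_congr rfl fun _ _ => Finset.sum_congr rfl fun _ _ => by ring

variable [DecidableEq n]

theorem IsHermitian.re_trace_mul_le {A V : Matrix n n 𝕜} (hA : A.IsHermitian)
    (hV : V.PosSemidef) {c : ℝ} (hc : ∀ i, hA.eigenvalues i ≤ c) :
    RCLike.re (trace (V * A)) ≤ RCLike.re (trace V) * c := by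
  set U : Matrix n n 𝕜 := ↑hA.eigenvectorUnitary
  set W := star U * V * U
  have hW : W.PosSemidef := by
    simpa [W, star_eq_conjTranspose] using hV.conjTranspose_mul_mul_same U
  have hWV : trace W = trace V := by
    rw [trace_mul_cycle, Unitary.mul_star_self_of_mem hA.eigenvectorUnitary.2, Matrix.one_mul]
  have hVA : trace (V * A) = ∑ i, W i i * hA.eigenvalues i := by
    conv_lhs => rw [hA.spectral_theorem, Unitary.conjStarAlgAut_apply]
    rw [← Matrix.mul_assoc, ← Matrix.mul_assoc, trace_mul_comm, ← Matrix.mul_assoc,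
      ← Matrix.mul_assoc]
    simp [trace, W, U, mul_diagonal]
  rw [hVA, ← hWV, trace, map_sum, map_sum, Finset.sum_mul]
  refine Finset.sum_le_sum fun i _ => ?_
  rw [RCLike.re_mul_ofReal]
  exact mul_le_mul_of_nonneg_left (hc i) (RCLike.nonneg_iff.1 hW.diag_nonneg).1

theorem IsHermitian.exists_posSemidef_re_trace_mul_eq {A : Matrix n n 𝕜} (hA : A.IsHermitian)
    (i : n) {c : ℝ} (hc : 0 ≤ c) :
    ∃ V : Matrix n n 𝕜, V.PosSemidef ∧ RCLike.re (trace V) = c ∧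
      RCLike.re (trace (V * A)) = c * hA.eigenvalues i := by
  set υ := hA.eigenvectorBasis i
  have hυ : ⇑υ ⬝ᵥ star ⇑υ = 1 := by
    have := EuclideanSpace.inner_eq_star_dotProduct υ υ
    rw [inner_self_eq_norm_sq_to_K, hA.eigenvectorBasis.orthonormal.1 i] at this
    simpa [dotProduct_comm] using this.symm
  refine ⟨(c : 𝕜) • vecMulVec υ (star υ),
    (posSemidef_vecMulVec_self_star _).smul (RCLike.ofReal_nonneg.2 hc), ?_, ?_⟩
  · simp [hυ, RCLike.real_smul_eq_coe_mul]
  · rw [smul_mul, trace_smul, trace_mul_comm, mul_vecMulVec, hA.mulVec_eigenvectorBasis,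
      trace_vecMulVec, smul_dotProduct, hυ]
    simp [mul_comm]

end Matrix

theorem sum_mul_re_dotProduct_mulVec_eq_re_trace {ι n : Type*} [Fintype ι] [Fintype n]
    (h : ι → n → ℂ) (γ : ι → ℝ) (hγ : ∀ k, 0 ≤ γ k) (V : Matrix n n ℂ) :
    ∑ k, γ k * (star (h k) ⬝ᵥ (V *ᵥ h k)).re =
      (V * ((Matrix.of fun n k => ((Real.sqrt (γ k) : ℝ) : ℂ) * h k n) *
        (Matrix.of fun n k => ((Real.sqrt (γ k) : ℝ) : ℂ) * h k n)ᴴ)).trace.re := by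
  rw [← sum_star_dotProduct_mulVec_col, Complex.re_sum]
  refine Finset.sum_congr rfl fun k _ => ?_
  have hcol : (Matrix.of fun n k => ((Real.sqrt (γ k) : ℝ) : ℂ) * h k n)ᵀ k =
      ((Real.sqrt (γ k) : ℝ) : ℂ) • h k := by
    ext; simp
  rw [hcol, star_smul, mulVec_smul, dotProduct_smul, smul_dotProduct]
  simp [← mul_assoc, ← Complex.ofReal_mul, Real.mul_self_sqrt (hγ k)]

open Matrix ComplexOrder in
/-- Main reduction theorem: the optimal value of the joint time-allocation and
energy-covariance (SDR) sum-throughput problem equals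
`max_{τ₀ ∈ [0,1]} (1 − τ₀)·log₂(1 + τ₀/(1 − τ₀)·P·λ_max(G Gᴴ))`, where
`G = [√γ₁ h₁, …, √γ_K h_K]`. -/
theorem stmt_11 (N K : ℕ) (hN : 0 < N) (h : Fin K → (Fin N → ℂ))
    (γ : Fin K → ℝ) (hγ : ∀ k, 0 < γ k) (P : ℝ) (hP : 0 < P) :
    sSup {x : ℝ | ∃ (τ : Fin (K+1) → ℝ) (V : Matrix (Fin N) (Fin N) ℂ),
        (∀ i, 0 ≤ τ i) ∧ (∑ i, τ i) ≤ 1 ∧ V.PosSemidef ∧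
        V.trace.re ≤ τ 0 * P ∧
        x = ∑ k : Fin K, τ k.succ *
              Real.logb 2 (1 + γ k / τ k.succ * (star (h k) ⬝ᵥ (V *ᵥ h k)).re)} =
    sSup {y : ℝ | ∃ τ₀ ∈ Set.Icc (0:ℝ) 1,
        y = (1 - τ₀) * Real.logb 2 (1 + τ₀ / (1 - τ₀) * P *
          ⨆ i, (Matrix.isHermitian_mul_conjTranspose_self
            (Matrix.of fun (n : Fin N) (k : Fin K) =>
              ((Real.sqrt (γ k) : ℝ) : ℂ) * h k n)).eigenvalues i)} := by
  have : Nonempty (Fin N) := Fin.pos_iff_nonempty.mp hN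
  set G : Matrix (Fin N) (Fin K) ℂ := Matrix.of fun n k => ((Real.sqrt (γ k) : ℝ) : ℂ) * h k n
  have hA := isHermitian_mul_conjTranspose_self G
  obtain ⟨i₀, hi₀⟩ := exists_eq_ciSup_of_finite (f := hA.eigenvalues)
  set lam := ⨆ i, hA.eigenvalues i
  have hlam0 : 0 ≤ lam := hi₀ ▸ eigenvalues_self_mul_conjTranspose_nonneg G i₀
  have hgain := sum_mul_re_dotProduct_mulVec_eq_re_trace h γ fun k => (hγ k).le
  have hgain0 (V : Matrix (Fin N) (Fin N) ℂ) (hV : V.PosSemidef) (k : Fin K) :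
      0 ≤ γ k * (star (h k) ⬝ᵥ (V *ᵥ h k)).re :=
    mul_nonneg (hγ k).le (hV.re_dotProduct_nonneg _)
  apply csSup_eq_csSup_of_forall_exists_le
  · rintro _ ⟨τ, V, hτ, hτ1, hV, htr, rfl⟩
    rw [Fin.sum_univ_succ] at hτ1
    have hT : 0 ≤ ∑ k : Fin K, τ k.succ := sum_nonneg fun k _ => hτ _
    refine ⟨_, ⟨1 - ∑ k : Fin K, τ k.succ, ⟨by linarith [hτ 0], by linarith⟩, rfl⟩, ?_⟩
    simp only [div_mul_eq_mul_div (γ _), mul_assoc _ P]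
    refine sum_mul_logb_one_add_div_le_of_sum_le one_lt_two _ _ (fun k => hτ _) (hgain0 V hV)
      (by ring) ?_
    calc ∑ k, γ k * (star (h k) ⬝ᵥ (V *ᵥ h k)).re = (V * (G * Gᴴ)).trace.re := hgain V
      _ ≤ V.trace.re * lam := hA.re_trace_mul_le hV fun i => le_ciSup (Finite.bddAbove_range _) i
      _ ≤ τ 0 * P * lam := by gcongr
      _ ≤ (1 - ∑ k : Fin K, τ k.succ) * (P * lam) := by
        rw [← mul_assoc]; gcongr; linarith
  · rintro _ ⟨τ₀, ⟨h0, h1⟩, rfl⟩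
    obtain ⟨V, hV, htr, hVA⟩ := hA.exists_posSemidef_re_trace_mul_eq i₀ (mul_nonneg h0 hP.le)
    obtain ⟨t, ht, ht1, heq⟩ :=
      exists_sum_mul_logb_one_add_div_eq 2 _ (hgain0 V hV) h1 (c := P * lam)
      (by rw [hgain, ← RCLike.re_to_complex, hVA, hi₀, mul_assoc])
    refine ⟨_, ⟨Fin.cons τ₀ t, V, Fin.cases h0 ht, by rwa [Fin.sum_cons], hV,
      by simpa using htr.le, rfl⟩, ?_⟩
    simp only [Fin.cons_succ, div_mul_eq_mul_div (γ _), heq, mul_assoc _ P, le_refl]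
end

section
/- The function (τ₀, V) ↦ ∑_{k=1}^K τ_k·log₂(1 + (γ_k/τ_k)·Tr(h_k h_k^H V)) together with the constraints ∑_{k=0}^K τ_k ≤ 1, τ ≥ 0, V ⪰ 0, Tr(V) ≤ τ₀·P_max defines a convex optimization problem: the feasible set is convex and the objective is concave in (τ₁,…,τ_K, V) jointly. -/
/-!
With `q_k = Re(h_kᴴ V h_k)`, which is linear in `V` and nonnegative for `V ⪰ 0`, each summand
`τ_k · log₂(1 + γ_k q_k / τ_k)` is the perspective `s · g(x / s)` of the concave, nondecreasing
function `g u = log₂(1 + γ_k u)` at `(s, x) = (τ_k, q_k)`. A perspective is positively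
homogeneous, so its joint concavity is the superadditivity
`s g(x/s) + t g(y/t) ≤ (s+t) g((x+y)/(s+t))`, which is concavity of `g` at the weights
`s/(s+t)`, `t/(s+t)`. At `s = 0` the summand is `0` (its limiting value), and superadditivity
there reduces to monotonicity of `g`. The feasible set is an intersection of half-spaces with
the preimage of the PSD cone.
-/

open Set Matrix ComplexOrder

section Perspective

variable {g : ℝ → ℝ}

noncomputable def perspective (g : ℝ → ℝ) (s x : ℝ) : ℝ := s * g (x / s)

@[simp] lemma perspective_zero_left (x : ℝ) : perspective g 0 x = 0 := zero_mul _

lemma mul_perspective (c s x : ℝ) : c * perspective g s x = perspective g (c * s) (c * x) := by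
  rcases eq_or_ne c 0 with rfl | hc
  · simp
  · rw [perspective, perspective, mul_div_mul_left x s hc, mul_assoc]

lemma perspective_le_perspective_add_left (hmono : MonotoneOn g (Ici 0))
    {t x y : ℝ} (ht : 0 ≤ t) (hx : 0 ≤ x) (hy : 0 ≤ y) :
    perspective g t y ≤ perspective g t (x + y) :=
  mul_le_mul_of_nonneg_left (hmono (div_nonneg hy ht) (div_nonneg (by positivity) ht)
    (div_le_div_of_nonneg_right (by linarith) ht)) ht

lemma perspective_add_le (hg : ConcaveOn ℝ (Ici 0) g) (hmono : MonotoneOn g (Ici 0))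
    {s t x y : ℝ} (hs : 0 ≤ s) (ht : 0 ≤ t) (hx : 0 ≤ x) (hy : 0 ≤ y) :
    perspective g s x + perspective g t y ≤ perspective g (s + t) (x + y) := by
  rcases hs.eq_or_lt with rfl | hs
  · simpa using perspective_le_perspective_add_left hmono ht hx hy
  rcases ht.eq_or_lt with rfl | ht
  · simpa [add_comm x] using perspective_le_perspective_add_left hmono hs.le hy hx
  have hst : 0 < s + t := add_pos hs ht
  have hjensen := hg.2 (div_nonneg hx hs.le) (div_nonneg hy ht.le)
    (div_nonneg hs.le hst.le) (div_nonneg ht.le hst.le) (by field_simp)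
  have hmean : (s / (s + t)) • (x / s) + (t / (s + t)) • (y / t) = (x + y) / (s + t) := by
    simp only [smul_eq_mul]; field_simp
  rw [hmean, smul_eq_mul, smul_eq_mul] at hjensen
  calc perspective g s x + perspective g t y
      = (s + t) * (s / (s + t) * g (x / s) + t / (s + t) * g (y / t)) := by
        simp only [perspective]; field_simp
    _ ≤ perspective g (s + t) (x + y) := mul_le_mul_of_nonneg_left hjensen hst.le

theorem concaveOn_perspective (hg : ConcaveOn ℝ (Ici 0) g) (hmono : MonotoneOn g (Ici 0)) :
    ConcaveOn ℝ (Ici 0 ×ˢ Ici 0) fun q : ℝ × ℝ => perspective g q.1 q.2 := by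
  refine ⟨(convex_Ici 0).prod (convex_Ici 0), ?_⟩
  rintro ⟨s, x⟩ ⟨hs, hx⟩ ⟨t, y⟩ ⟨ht, hy⟩ a b ha hb -
  simp only [Prod.smul_mk, Prod.mk_add_mk, smul_eq_mul, mul_perspective]
  exact perspective_add_le hg hmono (mul_nonneg ha hs) (mul_nonneg hb ht)
    (mul_nonneg ha hx) (mul_nonneg hb hy)

end Perspective

section Rate

variable {b γ : ℝ}

lemma concaveOn_logb_one_add_mul (hb : 1 < b) (hγ : 0 ≤ γ) :
    ConcaveOn ℝ (Ici 0) fun u => Real.logb b (1 + γ * u) := by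
  have hlog : ConcaveOn ℝ (Ici 0) fun u => Real.log (1 + γ * u) := by
    refine ⟨convex_Ici 0, fun u (hu : 0 ≤ u) v (hv : 0 ≤ v) p q hp hq hpq => ?_⟩
    have := strictConcaveOn_log_Ioi.concaveOn.2 (x := 1 + γ * u) (y := 1 + γ * v)
      (by simp only [mem_Ioi]; positivity) (by simp only [mem_Ioi]; positivity) hp hq hpq
    convert this using 2
    simp only [smul_eq_mul]
    linear_combination (-1 : ℝ) * hpq
  refine (hlog.smul (inv_nonneg.2 (Real.log_pos hb).le)).congr fun u _ => ?_
  simp [Real.logb, div_eq_inv_mul]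

lemma monotoneOn_logb_one_add_mul (hb : 1 < b) (hγ : 0 ≤ γ) :
    MonotoneOn (fun u => Real.logb b (1 + γ * u)) (Ici 0) := fun u hu v _ huv =>
  Real.logb_le_logb_of_le hb (by have := mem_Ici.1 hu; positivity) (by gcongr)

theorem concaveOn_mul_logb_one_add_div_mul (hb : 1 < b) (hγ : 0 ≤ γ) :
    ConcaveOn ℝ (Ici 0 ×ˢ Ici 0) fun q : ℝ × ℝ => q.1 * Real.logb b (1 + γ / q.1 * q.2) := by
  refine (concaveOn_perspective (concaveOn_logb_one_add_mul hb hγ)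
    (monotoneOn_logb_one_add_mul hb hγ)).congr fun q _ => ?_
  simp only [perspective, mul_div_assoc', div_mul_eq_mul_div]

end Rate

lemma ConcaveOn.fun_sum {𝕜 E β ι : Type*} [Semiring 𝕜] [PartialOrder 𝕜] [AddCommMonoid E]
    [AddCommMonoid β] [PartialOrder β] [IsOrderedAddMonoid β] [SMul 𝕜 E] [Module 𝕜 β]
    {s : Set E} {t : Finset ι} {f : ι → E → β} (hs : Convex 𝕜 s)
    (hf : ∀ i ∈ t, ConcaveOn 𝕜 s (f i)) : ConcaveOn 𝕜 s fun x => ∑ i ∈ t, f i x := by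
  classical
  induction t using Finset.induction_on with
  | empty => simpa using concaveOn_const (0 : β) hs
  | insert i t hi ih =>
    simp only [Finset.sum_insert hi]
    exact (hf i (Finset.mem_insert_self i t)).add
      (ih fun j hj => hf j (Finset.mem_insert_of_mem hj))

lemma Matrix.convex_posSemidef {n 𝕜 : Type*} [Fintype n] [RCLike 𝕜] :
    Convex ℝ {A : Matrix n n 𝕜 | A.PosSemidef} :=
  fun _ hA _ hB _ _ ha hb _ => (hA.smul ha).add (hB.smul hb)

lemma Matrix.PosSemidef.re_dotProduct_mulVec_nonneg {n : Type*} [Fintype n]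
    {A : Matrix n n ℂ} (hA : A.PosSemidef) (v : n → ℂ) : 0 ≤ (star v ⬝ᵥ (A *ᵥ v)).re :=
  (Complex.nonneg_iff.1 (hA.dotProduct_mulVec_nonneg v)).1

noncomputable def Matrix.reDotProductMulVec {n : Type*} [Fintype n] (v : n → ℂ) :
    Matrix n n ℂ →ₗ[ℝ] ℝ where
  toFun A := (star v ⬝ᵥ (A *ᵥ v)).re
  map_add' A B := by simp [add_mulVec]
  map_smul' c A := by simp [smul_mulVec]

lemma convex_timeShare_posSemidef {ι n : Type*} [Fintype ι] [Fintype n] (i₀ : ι) (P : ℝ) :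
    Convex ℝ {p : (ι → ℝ) × Matrix n n ℂ |
      (∀ i, 0 ≤ p.1 i) ∧ (∑ i, p.1 i) ≤ 1 ∧ p.2.PosSemidef ∧ p.2.trace.re ≤ p.1 i₀ * P} := by
  have hnonneg : Convex ℝ {p : (ι → ℝ) × Matrix n n ℂ | ∀ i, 0 ≤ p.1 i} :=
    (convex_Ici 0).linear_preimage (LinearMap.fst ℝ _ _)
  have hsum : Convex ℝ {p : (ι → ℝ) × Matrix n n ℂ | ∑ i, p.1 i ≤ 1} :=
    convex_halfSpace_le ⟨fun p q => Finset.sum_add_distrib, fun c p => (Finset.mul_sum ..).symm⟩ 1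
  have hpsd : Convex ℝ {p : (ι → ℝ) × Matrix n n ℂ | p.2.PosSemidef} :=
    (convex_posSemidef (n := n) (𝕜 := ℂ)).linear_preimage (LinearMap.snd ℝ (ι → ℝ) _)
  have htrace : Convex ℝ {p : (ι → ℝ) × Matrix n n ℂ | p.2.trace.re ≤ p.1 i₀ * P} := by
    have hlin : IsLinearMap ℝ fun p : (ι → ℝ) × Matrix n n ℂ => p.2.trace.re - p.1 i₀ * P :=
      ⟨fun p q => by
        simp only [Prod.snd_add, Prod.fst_add, trace_add, Complex.add_re, Pi.add_apply]; ring,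
       fun c p => by
        simp only [Prod.smul_snd, Prod.smul_fst, trace_smul, Complex.smul_re, Pi.smul_apply,
          smul_eq_mul]; ring⟩
    simpa only [sub_nonpos] using convex_halfSpace_le hlin 0
  exact hnonneg.inter (hsum.inter (hpsd.inter htrace))

open Matrix ComplexOrder in
theorem stmt_17_general (N K : ℕ) (h : Fin K → (Fin N → ℂ)) (γ : Fin K → ℝ)
    (hγ : ∀ k, 0 < γ k) (P : ℝ) :
    Convex ℝ {p : (Fin (K+1) → ℝ) × Matrix (Fin N) (Fin N) ℂ |
        (∀ i, 0 ≤ p.1 i) ∧ (∑ i, p.1 i) ≤ 1 ∧ p.2.PosSemidef ∧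
        p.2.trace.re ≤ p.1 0 * P} ∧
    ConcaveOn ℝ {p : (Fin (K+1) → ℝ) × Matrix (Fin N) (Fin N) ℂ |
        (∀ i, 0 ≤ p.1 i) ∧ (∑ i, p.1 i) ≤ 1 ∧ p.2.PosSemidef ∧
        p.2.trace.re ≤ p.1 0 * P}
      (fun p => ∑ k : Fin K, p.1 k.succ *
        Real.logb 2 (1 + γ k / p.1 k.succ * (star (h k) ⬝ᵥ (p.2 *ᵥ h k)).re)) := by
  have hS := convex_timeShare_posSemidef (n := Fin N) (0 : Fin (K + 1)) P
  refine ⟨hS, ConcaveOn.fun_sum hS fun k _ => ?_⟩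
  let L : (Fin (K + 1) → ℝ) × Matrix (Fin N) (Fin N) ℂ →ₗ[ℝ] ℝ × ℝ :=
    (LinearMap.proj k.succ ∘ₗ LinearMap.fst ℝ _ _).prod
      (reDotProductMulVec (h k) ∘ₗ LinearMap.snd ℝ _ _)
  have hL := (concaveOn_mul_logb_one_add_div_mul one_lt_two (hγ k).le).comp_linearMap L
  exact hL.subset (fun p hp => ⟨hp.1 k.succ, hp.2.2.1.re_dotProduct_mulVec_nonneg (h k)⟩) hS

open Matrix ComplexOrder in
/-- The SDR sum-throughput problem is a convex optimization problem: the
feasible set (time fractions `τ ≥ 0` with `∑ τ_i ≤ 1`, PSD covariance `V` with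
`Tr(V) ≤ τ₀·P_max`) is convex, and the objective
`(τ, V) ↦ ∑ τ_k·log₂(1 + (γ_k/τ_k)·h_kᴴ V h_k)` is concave on it. -/
theorem stmt_17 (N K : ℕ) (h : Fin K → (Fin N → ℂ)) (γ : Fin K → ℝ)
    (hγ : ∀ k, 0 < γ k) (P : ℝ) (hP : 0 < P) :
    Convex ℝ {p : (Fin (K+1) → ℝ) × Matrix (Fin N) (Fin N) ℂ |
        (∀ i, 0 ≤ p.1 i) ∧ (∑ i, p.1 i) ≤ 1 ∧ p.2.PosSemidef ∧
        p.2.trace.re ≤ p.1 0 * P} ∧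
    ConcaveOn ℝ {p : (Fin (K+1) → ℝ) × Matrix (Fin N) (Fin N) ℂ |
        (∀ i, 0 ≤ p.1 i) ∧ (∑ i, p.1 i) ≤ 1 ∧ p.2.PosSemidef ∧
        p.2.trace.re ≤ p.1 0 * P}
      (fun p => ∑ k : Fin K, p.1 k.succ *
        Real.logb 2 (1 + γ k / p.1 k.succ * (star (h k) ⬝ᵥ (p.2 *ᵥ h k)).re)) :=
  stmt_17_general N K h γ hγ P
end
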